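/- Let a, b, x be d×d complex matrices with b Hermitian positive definite, and suppose bx + xb = a. Then ‖x‖ ≤ √(d/2) · ‖b⁻¹‖ · ‖a‖, where ‖·‖ denotes the Frobenius norm ‖x‖ = √(tr(x x*)). -/

import Mathlib

open Matrix
open scoped ComplexOrder

/-- The Frobenius norm of a complex matrix: `‖x‖ = √(tr (x x*))`. -/
noncomputable def frobNorm {d : ℕ} (x : Matrix (Fin d) (Fin d) ℂ) : ℝ :=
  Real.sqrt ((x * xᴴ).trace.re)

/-!
With `⟪p, q⟫ = re tr (p q*)` the Frobenius inner product, write `b = c²` with `c = √b` Hermitian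
and put `u = c⁻¹ x c`, `v = c x c⁻¹`. Then
`⟪b⁻¹ x b + b x b⁻¹, x⟫ = ‖u‖² + ‖v‖² ≥ 2 ⟪u, v⟫ = 2 ‖x‖²`,
while the Sylvester equation gives `b⁻¹ a + a b⁻¹ = 2 x + b⁻¹ x b + b x b⁻¹`. Hence
`4 ‖x‖² ≤ ⟪b⁻¹ a + a b⁻¹, x⟫ ≤ 2 ‖b⁻¹‖ ‖a‖ ‖x‖`, i.e. `‖x‖ ≤ ‖b⁻¹‖ ‖a‖ / 2`,
and `1/2 ≤ √(d/2)` once `d ≥ 1`.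
-/

attribute [local instance] Matrix.frobeniusNormedAddCommGroup

open RCLike WithLp

namespace Matrix

variable {𝕜 m n : Type*} [RCLike 𝕜] [Fintype m] [Fintype n]

/-- Mathlib's Frobenius norm is by definition the norm of this nested `L²` vector, whose inner
product is `tr (A Bᴴ)`. -/
def toFrobeniusLp (A : Matrix m n 𝕜) : WithLp 2 (m → WithLp 2 (n → 𝕜)) :=
  toLp 2 fun i ↦ toLp 2 (A i)

theorem norm_toFrobeniusLp (A : Matrix m n 𝕜) : ‖A.toFrobeniusLp‖ = ‖A‖ := rfl

theorem inner_toFrobeniusLp (A B : Matrix m n 𝕜) :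
    inner 𝕜 B.toFrobeniusLp A.toFrobeniusLp = (A * Bᴴ).trace := by
  simp [toFrobeniusLp, PiLp.inner_apply, trace, mul_apply]

theorem frobenius_norm_sq_eq_re_trace (A : Matrix m n 𝕜) : ‖A‖ ^ 2 = re (A * Aᴴ).trace := by
  rw [← norm_toFrobeniusLp, ← inner_toFrobeniusLp, inner_self_eq_norm_sq]

theorem re_trace_mul_conjTranspose_le (A B : Matrix m n 𝕜) :
    re (A * Bᴴ).trace ≤ ‖A‖ * ‖B‖ := by
  rw [← inner_toFrobeniusLp, ← norm_toFrobeniusLp, ← norm_toFrobeniusLp, mul_comm]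
  exact re_inner_le_norm _ _

variable [DecidableEq n] {c : Matrix n n 𝕜}

theorem IsHermitian.trace_conj_mul_conjTranspose_conj_inv (hc : c.IsHermitian)
    (hc₀ : IsUnit c.det) (x : Matrix n n 𝕜) :
    (c⁻¹ * x * c * (c * x * c⁻¹)ᴴ).trace = (x * xᴴ).trace := by
  simp only [conjTranspose_mul, conjTranspose_nonsing_inv, hc.eq, Matrix.mul_assoc,
    mul_nonsing_inv_cancel_left c _ hc₀]
  rw [trace_mul_comm, Matrix.mul_assoc, mul_nonsing_inv_cancel_right c _ hc₀]

theorem IsHermitian.trace_conj_sq_mul_conjTranspose (hc : c.IsHermitian) (x : Matrix n n 𝕜) :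
    ((c * c)⁻¹ * x * (c * c) * xᴴ).trace = (c⁻¹ * x * c * (c⁻¹ * x * c)ᴴ).trace := by
  simp only [mul_inv_rev, conjTranspose_mul, conjTranspose_nonsing_inv, hc.eq, Matrix.mul_assoc]
  rw [trace_mul_comm c⁻¹]
  simp only [Matrix.mul_assoc]

open scoped MatrixOrder in
theorem PosDef.exists_isHermitian_mul_self_eq {b : Matrix n n 𝕜} (hb : b.PosDef) :
    ∃ c : Matrix n n 𝕜, c.IsHermitian ∧ IsUnit c.det ∧ c * c = b := by
  refine ⟨CFC.sqrt b, (CFC.sqrt_nonneg b).posSemidef.isHermitian, ?_,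
    CFC.sqrt_mul_sqrt_self b hb.posSemidef.nonneg⟩
  exact (isUnit_iff_isUnit_det _).mp <| (CFC.isUnit_sqrt_iff b hb.posSemidef.nonneg).mpr hb.isUnit

theorem PosDef.two_mul_sq_norm_le_re_trace {b : Matrix n n 𝕜} (hb : b.PosDef) (x : Matrix n n 𝕜) :
    2 * ‖x‖ ^ 2 ≤ re ((b⁻¹ * x * b + b * x * b⁻¹) * xᴴ).trace := by
  obtain ⟨c, hc, hc₀, rfl⟩ := hb.exists_isHermitian_mul_self_eq
  have hu := hc.trace_conj_sq_mul_conjTranspose x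
  have hv := hc.inv.trace_conj_sq_mul_conjTranspose x
  rw [nonsing_inv_nonsing_inv c hc₀, ← mul_inv_rev,
    nonsing_inv_nonsing_inv _ ((isUnit_iff_isUnit_det _).mp hb.isUnit)] at hv
  set u := c⁻¹ * x * c
  set v := c * x * c⁻¹
  calc 2 * ‖x‖ ^ 2 = 2 * re (u * vᴴ).trace := by
        rw [hc.trace_conj_mul_conjTranspose_conj_inv hc₀, frobenius_norm_sq_eq_re_trace]
    _ ≤ 2 * ‖u‖ * ‖v‖ := by linarith [re_trace_mul_conjTranspose_le u v]
    _ ≤ ‖u‖ ^ 2 + ‖v‖ ^ 2 := two_mul_le_add_sq _ _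
    _ = _ := by
        rw [frobenius_norm_sq_eq_re_trace, frobenius_norm_sq_eq_re_trace, add_mul, trace_add,
          map_add, hu, hv]

theorem PosDef.two_mul_norm_le_of_sylvester {a b x : Matrix n n 𝕜} (hb : b.PosDef)
    (h : b * x + x * b = a) : 2 * ‖x‖ ≤ ‖b⁻¹‖ * ‖a‖ := by
  have hb₀ : IsUnit b.det := (isUnit_iff_isUnit_det b).mp hb.isUnit
  have hsum : b⁻¹ * a + a * b⁻¹ = (b⁻¹ * x * b + b * x * b⁻¹) + (x + x) := by
    subst h
    simp only [mul_add, add_mul, nonsing_inv_mul_cancel_left b _ hb₀,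
      mul_nonsing_inv_cancel_right b _ hb₀, Matrix.mul_assoc]
    abel
  have hlower : 4 * ‖x‖ ^ 2 ≤ re ((b⁻¹ * a + a * b⁻¹) * xᴴ).trace := by
    rw [hsum, add_mul _ (x + x), add_mul x, trace_add, trace_add, map_add, map_add,
      ← frobenius_norm_sq_eq_re_trace]
    linarith [hb.two_mul_sq_norm_le_re_trace x]
  have hupper : re ((b⁻¹ * a + a * b⁻¹) * xᴴ).trace ≤ 2 * (‖b⁻¹‖ * ‖a‖) * ‖x‖ := calc
    _ ≤ ‖b⁻¹ * a + a * b⁻¹‖ * ‖x‖ := re_trace_mul_conjTranspose_le _ _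
    _ ≤ (‖b⁻¹‖ * ‖a‖ + ‖a‖ * ‖b⁻¹‖) * ‖x‖ := by
        gcongr
        exact (norm_add_le _ _).trans (add_le_add (frobenius_norm_mul _ _) (frobenius_norm_mul _ _))
    _ = 2 * (‖b⁻¹‖ * ‖a‖) * ‖x‖ := by ring
  nlinarith [norm_nonneg x, mul_nonneg (norm_nonneg b⁻¹) (norm_nonneg a)]

end Matrix

theorem frobNorm_eq_norm {d : ℕ} (x : Matrix (Fin d) (Fin d) ℂ) : frobNorm x = ‖x‖ := by
  rw [frobNorm, ← re_to_complex, ← frobenius_norm_sq_eq_re_trace, Real.sqrt_sq (norm_nonneg x)]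

/-- If `b` is Hermitian positive definite and `b x + x b = a`, then
`‖x‖ ≤ √(d/2) ‖b⁻¹‖ ‖a‖` in the Frobenius norm. -/
theorem frobNorm_le_of_sylvester {d : ℕ} (a b x : Matrix (Fin d) (Fin d) ℂ)
    (hb : b.PosDef) (h : b * x + x * b = a) :
    frobNorm x ≤ Real.sqrt ((d : ℝ) / 2) * frobNorm b⁻¹ * frobNorm a := by
  simp only [frobNorm_eq_norm]
  have hx := hb.two_mul_norm_le_of_sylvester h
  rcases Nat.eq_zero_or_pos d with rfl | hd
  · rw [Subsingleton.elim x 0, norm_zero]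
    positivity
  · have hd' : (1 : ℝ) ≤ d := by exact_mod_cast hd
    have : 1 / 2 ≤ √((d : ℝ) / 2) := by
      rw [Real.le_sqrt' one_half_pos]
      linarith
    nlinarith [mul_nonneg (norm_nonneg b⁻¹) (norm_nonneg a)]
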